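/- Let M be a finite set and 𝒮 the family of union-free generic sets of partial orders on M. Then 𝒮 is connected in the following sense: for every S ∈ 𝒮 with |S| = k ≥ 3 there exists S_m ⊊ S with |S_m| = k − 1 and S_m ∈ 𝒮. -/

import Mathlib

open scoped Classical

variable {M : Type*}

/-- `p ⊆ M × M` is a partial order: reflexive, antisymmetric, transitive. -/
def IsPO (p : Set (M × M)) : Prop :=
  (∀ x : M, (x, x) ∈ p) ∧ (∀ x y : M, (x, y) ∈ p → (y, x) ∈ p → x = y) ∧
  (∀ x y z : M, (x, y) ∈ p → (y, z) ∈ p → (x, z) ∈ p)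

/-- The set 𝒫 of all partial orders on `M`. -/
def Posets (M : Type*) : Set (Set (M × M)) := {p | IsPO p}

/-- The closure operator γ(P) = {p ∈ 𝒫 | ⋂P ⊆ p ⊆ ⋃P}. -/
def gam (P : Set (Set (M × M))) : Set (Set (M × M)) :=
  {q | q ∈ Posets M ∧ (⋂ p ∈ P, p) ⊆ q ∧ q ⊆ ⋃ p ∈ P, p}

/-- `S` is union-free generic: (C1) `S ⊊ γ(S)` and (C2) no family of proper
subsets of `S` has closures whose union is `γ(S)`. -/
def IsUfg (S : Set (Set (M × M))) : Prop :=
  S ⊆ Posets M ∧ S ⊂ gam S ∧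
    ¬ ∃ (ℓ : ℕ) (A : Fin ℓ → Set (Set (M × M))),
        (∀ i, A i ⊂ S) ∧ (⋃ i, gam (A i)) = gam S

/-! Read a pair `(a, b)` of a partial order `q` as the interval `[a, b]`. A finite `S` is union-free
generic iff it has a witness: some `q ∈ γ(S)` lying in no `γ(S \ {s})`. Given a witness `q` of `S`,
we delete a suitable `s₀` and build a witness of `T = S \ {s₀}` as the transitive closure of `⋂T`
together with, for every `s` whose removal keeps `⋂(T \ {s}) ⊆ q`, a pair of `q \ ⋃(S \ {s})`.
If no `s ∈ S` has `⋂(S \ {s}) ⊆ q`, then `⋂T` itself is a witness. Otherwise the added pairs are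
chosen with as few enclosing intervals in `q` as possible and `s₀` maximises that number, so no
pair of `q` outside `⋃T` encloses an added pair; this keeps the closure inside `⋃T`. -/

section

variable {S T A B : Set (Set (M × M))} {p q L Y : Set (M × M)}

theorem IsPO.refl (hp : IsPO p) (x : M) : (x, x) ∈ p := hp.1 x

theorem IsPO.antisymm (hp : IsPO p) {x y : M} (hxy : (x, y) ∈ p) (hyx : (y, x) ∈ p) : x = y :=
  hp.2.1 x y hxy hyx

theorem IsPO.trans (hp : IsPO p) {x y z : M} (hxy : (x, y) ∈ p) (hyz : (y, z) ∈ p) :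
    (x, z) ∈ p :=
  hp.2.2 x y z hxy hyz

theorem isPO_sInter (hS : S ⊆ Posets M) (hne : S.Nonempty) : IsPO (⋂₀ S) := by
  obtain ⟨t, ht⟩ := hne
  exact ⟨fun x p hp => (hS hp).refl x,
    fun x y hxy hyx => (hS ht).antisymm (hxy t ht) (hyx t ht),
    fun x y z hxy hyz p hp => (hS hp).trans (hxy p hp) (hyz p hp)⟩

theorem mem_gam_iff : q ∈ gam S ↔ IsPO q ∧ ⋂₀ S ⊆ q ∧ q ⊆ ⋃₀ S := by
  rw [Set.sInter_eq_biInter, Set.sUnion_eq_biUnion]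
  rfl

theorem gam_mono (h : A ⊆ B) : gam A ⊆ gam B := fun q hq => by
  obtain ⟨hq, hAq, hqA⟩ := mem_gam_iff.1 hq
  exact mem_gam_iff.2
    ⟨hq, (Set.sInter_subset_sInter h).trans hAq, hqA.trans (Set.sUnion_subset_sUnion h)⟩

theorem subset_gam (hS : S ⊆ Posets M) : S ⊆ gam S := fun _ ht =>
  mem_gam_iff.2 ⟨hS ht, Set.sInter_subset_of_mem ht, Set.subset_sUnion_of_mem ht⟩

def IsWitness (S : Set (Set (M × M))) (q : Set (M × M)) : Prop :=
  q ∈ gam S ∧ ∀ s ∈ S, q ∉ gam (S \ {s})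

theorem IsWitness.notMem_gam_of_ssubset (hq : IsWitness S q) (hA : A ⊂ S) : q ∉ gam A := by
  obtain ⟨s, hs, hsA⟩ := Set.exists_of_ssubset hA
  exact fun h => hq.2 s hs (gam_mono (Set.subset_sdiff_singleton hA.1 hsA) h)

theorem isUfg_of_isWitness (hS : S ⊆ Posets M) (hnt : S.Nontrivial) (hq : IsWitness S q) :
    IsUfg S := by
  have hqS : q ∉ S := fun hqS => by
    obtain ⟨s, hs, hsq⟩ := hnt.exists_ne q
    exact hq.2 s hs (subset_gam (Set.sdiff_subset.trans hS) ⟨hqS, hsq.symm⟩)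
  refine ⟨hS, (Set.ssubset_iff_of_subset (subset_gam hS)).2 ⟨q, hq.1, hqS⟩, ?_⟩
  rintro ⟨ℓ, A, hA, hcover⟩
  obtain ⟨i, hi⟩ := Set.mem_iUnion.1 (hcover ▸ hq.1)
  exact hq.notMem_gam_of_ssubset (hA i) hi

theorem IsUfg.exists_isWitness (hS : IsUfg S) (hfin : S.Finite) : ∃ q, IsWitness S q := by
  by_contra! hnone
  have : Finite S := hfin
  obtain ⟨n, ⟨e⟩⟩ := Finite.exists_equiv_fin S
  refine hS.2.2 ⟨n, fun i => S \ {(e.symm i : Set (M × M))},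
    fun i => Set.sdiff_singleton_ssubset.2 (e.symm i).2, ?_⟩
  refine (Set.iUnion_subset fun i => gam_mono Set.sdiff_subset).antisymm fun q hq => ?_
  obtain ⟨s, hs, hqs⟩ : ∃ s ∈ S, q ∈ gam (S \ {s}) := by
    simpa [IsWitness, hq] using hnone q
  exact Set.mem_iUnion.2 ⟨e ⟨s, hs⟩, by simpa using hqs⟩

def transClosure (r : Set (M × M)) : Set (M × M) :=
  {z | Relation.TransGen (fun a b => (a, b) ∈ r) z.1 z.2}

theorem subset_transClosure {r : Set (M × M)} : r ⊆ transClosure r := fun _ hz =>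
  Relation.TransGen.single hz

theorem transClosure_trans {r : Set (M × M)} {x y z : M} (hxy : (x, y) ∈ transClosure r)
    (hyz : (y, z) ∈ transClosure r) : (x, z) ∈ transClosure r :=
  Relation.TransGen.trans hxy hyz

theorem transClosure_subset {r : Set (M × M)} (hq : IsPO q) (hrq : r ⊆ q) :
    transClosure r ⊆ q := by
  rintro ⟨a, b⟩ (hab : Relation.TransGen _ a b)
  induction hab with
  | single hab => exact hrq hab
  | tail _ hbc ih => exact hq.trans ih (hrq hbc)

def Encloses (q : Set (M × M)) (w z : M × M) : Prop :=
  (w.1, z.1) ∈ q ∧ (z.2, w.2) ∈ q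

theorem mem_or_encloses_of_mem_transClosure_union (hq : IsPO q) (hL : IsPO L) (hLq : L ⊆ q)
    (hYq : Y ⊆ q) {z : M × M} (hz : z ∈ transClosure (L ∪ Y)) :
    z ∈ L ∨ ∃ y ∈ Y, Encloses q z y := by
  obtain ⟨a, c⟩ := z
  change Relation.TransGen _ a c at hz
  induction hz with
  | single hab =>
    rcases hab with hab | hab
    · exact Or.inl hab
    · exact Or.inr ⟨_, hab, hq.refl _, hq.refl _⟩
  | tail _ hbc ih =>
    rcases ih, hbc with ⟨hab | ⟨y, hy, hay, hyb⟩, hbc | hbc⟩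
    · exact Or.inl (hL.trans hab hbc)
    · exact Or.inr ⟨_, hbc, hLq hab, hq.refl _⟩
    · exact Or.inr ⟨y, hy, hay, hq.trans hyb (hLq hbc)⟩
    · exact Or.inr ⟨y, hy, hay, hq.trans hyb (hYq hbc)⟩

noncomputable def encloserCount (q : Set (M × M)) (z : M × M) : ℕ :=
  {w ∈ q | Encloses q w z}.ncard

theorem encloserCount_lt [Finite M] (hq : IsPO q) {w z : M × M} (hz : z ∈ q)
    (hwz : Encloses q w z) (hne : w ≠ z) : encloserCount q w < encloserCount q z := by
  refine Set.ncard_lt_ncard ⟨fun v ⟨hv, hvw⟩ => ⟨hv, hq.trans hvw.1 hwz.1, hq.trans hwz.2 hvw.2⟩,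
    fun hsub => hne ?_⟩ (Set.toFinite _)
  obtain ⟨-, hzw⟩ := hsub ⟨hz, hq.refl _, hq.refl _⟩
  exact Prod.ext (hq.antisymm hwz.1 hzw.1) (hq.antisymm hzw.2 hwz.2)

theorem isWitness_transClosure (hT : T ⊆ Posets M) (hTne : T.Nonempty) (hq : IsPO q)
    (hTq : ⋂₀ T ⊆ q) (hYq : Y ⊆ q)
    (hY : ∀ s ∈ T, ⋂₀ (T \ {s}) ⊆ q → ∃ y ∈ Y, y ∉ ⋃₀ (T \ {s}))
    (hencl : ∀ y ∈ Y, ∀ z ∈ q, Encloses q z y → z ∈ ⋃₀ T) :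
    IsWitness T (transClosure (⋂₀ T ∪ Y)) := by
  set q' := transClosure (⋂₀ T ∪ Y)
  have hL : IsPO (⋂₀ T) := isPO_sInter hT hTne
  have hq'q : q' ⊆ q := transClosure_subset hq (Set.union_subset hTq hYq)
  have hq' : IsPO q' := ⟨fun x => subset_transClosure (Or.inl (hL.refl x)),
    fun _ _ hxy hyx => hq.antisymm (hq'q hxy) (hq'q hyx), fun _ _ _ => transClosure_trans⟩
  have hq'T : q' ⊆ ⋃₀ T := fun z hz => by
    rcases mem_or_encloses_of_mem_transClosure_union hq hL hTq hYq hz with hzT | ⟨y, hy, hzy⟩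
    · obtain ⟨t, ht⟩ := hTne
      exact Set.subset_sUnion_of_mem ht (Set.sInter_subset_of_mem ht hzT)
    · exact hencl y hy z (hq'q hz) hzy
  refine ⟨mem_gam_iff.2 ⟨hq', fun z hz => subset_transClosure (Or.inl hz), hq'T⟩,
    fun s hs hmem => ?_⟩
  obtain ⟨-, hlow, hup⟩ := mem_gam_iff.1 hmem
  obtain ⟨y, hy, hyT⟩ := hY s hs (hlow.trans hq'q)
  exact hyT (hup (subset_transClosure (Or.inr hy)))

theorem exists_isWitness_sdiff_singleton_of_forall_not_subset (hS : S ⊆ Posets M)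
    (hnt : S.Nontrivial) (hSq : ⋂₀ S ⊆ q) (hN : ∀ s ∈ S, ¬ ⋂₀ (S \ {s}) ⊆ q) :
    ∃ s₀ ∈ S, ∃ q', IsWitness (S \ {s₀}) q' := by
  obtain ⟨s₀, hs₀⟩ := hnt.nonempty
  obtain ⟨t, ht, hts₀⟩ := hnt.exists_ne s₀
  have hT : S \ {s₀} ⊆ Posets M := Set.sdiff_subset.trans hS
  have hTne : (S \ {s₀}).Nonempty := ⟨t, ht, hts₀⟩
  refine ⟨s₀, hs₀, _, isWitness_transClosure hT hTne (isPO_sInter hT hTne) subset_rfl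
    (Set.empty_subset _) (fun s hs hsub => (hN s hs.1 ?_).elim) (by simp)⟩
  have hsub' : ⋂₀ (S \ {s}) ⊆ s := calc
    ⋂₀ (S \ {s}) ⊆ ⋂₀ ((S \ {s₀}) \ {s}) := Set.sInter_subset_sInter (by grind)
    _ ⊆ ⋂₀ (S \ {s₀}) := hsub
    _ ⊆ s := Set.sInter_subset_of_mem hs
  have hSs : ⋂₀ S = s ∩ ⋂₀ (S \ {s}) := by
    rw [← Set.sInter_insert, Set.insert_sdiff_singleton, Set.insert_eq_of_mem hs.1]
  exact (Set.subset_inter hsub' subset_rfl).trans (hSs ▸ hSq)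

theorem IsWitness.exists_isWitness_sdiff_singleton_of_exists_subset [Finite M]
    (hS : S ⊆ Posets M) (hnt : S.Nontrivial) (hq : IsWitness S q)
    (hN : ∃ s ∈ S, ⋂₀ (S \ {s}) ⊆ q) :
    ∃ s₀ ∈ S, ∃ q', IsWitness (S \ {s₀}) q' := by
  obtain ⟨hqPO, -, hqS⟩ := mem_gam_iff.1 hq.1
  set N := {s ∈ S | ⋂₀ (S \ {s}) ⊆ q}
  set U : Set (M × M) → Set (M × M) := fun s => q \ ⋃₀ (S \ {s})
  set m : Set (M × M) → ℕ := fun s => sInf (encloserCount q '' U s)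
  have hmem : ∀ s ∈ N, ∃ u ∈ U s, encloserCount q u = m s := fun s hs => by
    refine Nat.sInf_mem (Set.Nonempty.image _ (Set.nonempty_iff_ne_empty.2 fun h => ?_))
    exact hq.2 s hs.1 (mem_gam_iff.2 ⟨hqPO, hs.2, Set.sdiff_eq_empty.1 h⟩)
  obtain ⟨s₀, hs₀, hmax⟩ := Set.exists_max_image N m (Set.toFinite N) hN
  obtain ⟨t, ht, hts₀⟩ := hnt.exists_ne s₀
  refine ⟨s₀, hs₀.1, _, isWitness_transClosure
    (Y := ⋃ s ∈ N \ {s₀}, {u ∈ U s | encloserCount q u ≤ m s₀}) (Set.sdiff_subset.trans hS)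
    ⟨t, ht, hts₀⟩ hqPO hs₀.2 ?_ ?_ ?_⟩
  · exact Set.iUnion₂_subset fun s _ u hu => hu.1.1
  · intro s hs hsub
    have hsN : s ∈ N := ⟨hs.1, (Set.sInter_subset_sInter (by grind)).trans hsub⟩
    obtain ⟨u, hu, hum⟩ := hmem s hsN
    exact ⟨u, Set.mem_iUnion₂.2 ⟨s, ⟨hsN, hs.2⟩, hu, hum ▸ hmax s hsN⟩,
      fun h => hu.2 (Set.sUnion_subset_sUnion (by grind) h)⟩
  · intro u hu z hzq hzu
    obtain ⟨s, ⟨hsN, hss₀⟩, hu, hum⟩ := Set.mem_iUnion₂.1 hu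
    by_contra hzT
    obtain ⟨p, hp, hup⟩ := hqS hu.1
    obtain rfl : p = s := by
      by_contra hps
      exact hu.2 ⟨p, ⟨hp, hps⟩, hup⟩
    have hmz : m s₀ ≤ encloserCount q z := Nat.sInf_le ⟨z, ⟨hzq, hzT⟩, rfl⟩
    have hlt : encloserCount q z < encloserCount q u := encloserCount_lt hqPO hu.1 hzu
      (by rintro rfl; exact hzT (Set.subset_sUnion_of_mem (show p ∈ S \ {s₀} from ⟨hp, hss₀⟩) hup))
    omega

theorem IsWitness.exists_isWitness_sdiff_singleton [Finite M] (hS : S ⊆ Posets M)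
    (hnt : S.Nontrivial) (hq : IsWitness S q) : ∃ s₀ ∈ S, ∃ q', IsWitness (S \ {s₀}) q' := by
  by_cases hN : ∃ s ∈ S, ⋂₀ (S \ {s}) ⊆ q
  · exact hq.exists_isWitness_sdiff_singleton_of_exists_subset hS hnt hN
  · push Not at hN
    exact exists_isWitness_sdiff_singleton_of_forall_not_subset hS hnt
      (mem_gam_iff.1 hq.1).2.1 hN

end

theorem stmt7 {M : Type*} [Fintype M] (S : Set (Set (M × M))) (hS : IsUfg S)
    (k : ℕ) (hk : 3 ≤ k) (hcard : S.ncard = k) :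
    ∃ T : Set (Set (M × M)), T ⊂ S ∧ T.ncard = k - 1 ∧ IsUfg T := by
  obtain ⟨q, hq⟩ := hS.exists_isWitness (Set.toFinite S)
  obtain ⟨s₀, hs₀, q', hq'⟩ :=
    hq.exists_isWitness_sdiff_singleton hS.1 (Set.one_lt_ncard_iff_nontrivial.1 (by omega))
  have hTcard : (S \ {s₀}).ncard = k - 1 := by rw [Set.ncard_sdiff_singleton_of_mem hs₀, hcard]
  refine ⟨S \ {s₀}, Set.sdiff_singleton_ssubset.2 hs₀, hTcard, ?_⟩
  exact isUfg_of_isWitness (Set.sdiff_subset.trans hS.1)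
    (Set.one_lt_ncard_iff_nontrivial.1 (by omega)) hq'
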